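/- For all integers N ≥ 1 and i with 1 ≤ i ≤ N, the top-order coefficients satisfy a_{i,N+1−i}(N+1,x) = (−1)^i · i! · S_{1,i−1}(N−i+1) · (x)_{N−i+1}. -/

import Mathlib

open Finset

/-- Generalized Changhee power sums with shifted index: `genChangheeS j N = S_{1,j-1}(N)`,
so that `genChangheeS 0 N = S_{1,-1}(N) = 1`, `genChangheeS 1 N = S_{1,0}(N) = N + 1`,
and `genChangheeS (j+2) N = S_{1,j+1}(N) = ∑_{l=0}^{N} S_{1,j}(l)`. -/
def genChangheeS : ℕ → ℕ → ℚ
  | 0, _ => 1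
  | 1, N => N + 1
  | (j+2), N => ∑ l ∈ Finset.range (N+1), genChangheeS (j+1) l

/-- Falling factorial `(x)_n = x(x-1)⋯(x-n+1)`, with `(x)_0 = 1`. -/
noncomputable def fallingFactorial (x : ℝ) (n : ℕ) : ℝ := ∏ i ∈ Finset.range n, (x - i)

/-- The coefficients `a_{i,j}(N, x)` arising from repeated differentiation of the
λ-Changhee generating function: `a_{0,0}(N,x) = 0`, `a_{1,0}(1,x) = -1`, `a_{0,1}(1,x) = x`,
and for `N ≥ 1`, `i, j ≥ 0` with `1 ≤ i + j ≤ N + 1`,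
`a_{i,j}(N+1,x) = -N·a_{i,j}(N,x) - i·a_{i-1,j}(N,x) + (x - j + 1)·a_{i,j-1}(N,x)`,
with the convention that `a_{i,j}(N,x) = 0` whenever `i < 0`, `j < 0`, or `i + j > N`. -/
noncomputable def aCh : ℕ → ℤ → ℤ → ℝ → ℝ
  | 0, _, _, _ => 0
  | 1, i, j, x => if i = 1 ∧ j = 0 then -1 else if i = 0 ∧ j = 1 then x else 0
  | (N+2), i, j, x =>
      if 0 ≤ i ∧ 0 ≤ j ∧ 1 ≤ i + j ∧ i + j ≤ N + 2 then
        -(N+1 : ℝ) * aCh (N+1) i j x - (i : ℝ) * aCh (N+1) (i-1) j x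
          + (x - (j : ℝ) + 1) * aCh (N+1) i (j-1) x
      else 0

/-!
On the diagonal `i + j = N` the term `-(N-1)·a_{i,j}(N-1,x)` of the recursion drops out, because
`a` vanishes above the diagonal. What remains,
`a_{i,j}(N,x) = -i·a_{i-1,j}(N-1,x) + (x-j+1)·a_{i,j-1}(N-1,x)`, is solved by
`(-1)^i i! S_{1,i-1}(j) (x)_j`: the factor `i` turns `(i-1)!` into `i!`, the factor `x-j+1`
extends `(x)_{j-1}` to `(x)_j`, and the two Changhee sums add up by
`S_{1,i-1}(j) = S_{1,i-1}(j-1) + S_{1,i-2}(j)`.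
-/

lemma genChangheeS_zero_right : ∀ j, genChangheeS j 0 = 1
  | 0 => rfl
  | 1 => by norm_num [genChangheeS]
  | j + 2 => by simpa [genChangheeS] using genChangheeS_zero_right (j + 1)

lemma genChangheeS_succ_succ (k M : ℕ) :
    genChangheeS (k + 1) (M + 1) = genChangheeS (k + 1) M + genChangheeS k (M + 1) := by
  cases k with
  | zero => simp [genChangheeS]
  | succ k => rw [genChangheeS, genChangheeS, Finset.sum_range_succ]

lemma fallingFactorial_succ (x : ℝ) (n : ℕ) :
    fallingFactorial x (n + 1) = fallingFactorial x n * (x - n) :=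
  Finset.prod_range_succ _ _

lemma aCh_eq_zero_of_lt_add (M : ℕ) (i j : ℤ) (x : ℝ) (h : (M : ℤ) < i + j) :
    aCh M i j x = 0 := by
  match M with
  | 0 => rfl
  | 1 =>
    simp only [aCh]
    rw [if_neg (by omega), if_neg (by omega)]
  | N + 2 =>
    rw [aCh, if_neg (by push_cast at h; omega)]

lemma aCh_eq_zero_of_neg_right (M : ℕ) (i j : ℤ) (x : ℝ) (h : j < 0) :
    aCh M i j x = 0 := by
  match M with
  | 0 => rfl
  | 1 =>
    simp only [aCh]
    rw [if_neg (by omega), if_neg (by omega)]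
  | N + 2 =>
    rw [aCh, if_neg (by omega)]

lemma aCh_diag_rec (N : ℕ) (i j : ℤ) (x : ℝ) (hi : 0 ≤ i) (hj : 0 ≤ j)
    (h : i + j = N + 2) :
    aCh (N + 2) i j x = -(i : ℝ) * aCh (N + 1) (i - 1) j x
      + (x - j + 1) * aCh (N + 1) i (j - 1) x := by
  rw [aCh, if_pos (by omega), aCh_eq_zero_of_lt_add (N + 1) i j x (by push_cast; omega)]
  ring

theorem aCh_diag (i j : ℕ) (h : 1 ≤ i + j) (x : ℝ) :
    aCh (i + j) i j x
      = (-1 : ℝ) ^ i * i.factorial * (genChangheeS i j : ℝ) * fallingFactorial x j := by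
  obtain ⟨n, hn⟩ : ∃ n, i + j = n + 1 := ⟨i + j - 1, by omega⟩
  induction n generalizing i j with
  | zero =>
    obtain ⟨rfl, rfl⟩ | ⟨rfl, rfl⟩ : (i = 1 ∧ j = 0) ∨ (i = 0 ∧ j = 1) := by omega
    all_goals simp [aCh, genChangheeS, fallingFactorial]
  | succ n ih =>
    rw [hn, aCh_diag_rec n i j x (by omega) (by omega) (by omega)]
    rcases i with _ | i <;> rcases j with _ | j
    · omega
    · have ih0 := ih 0 j (by omega) (by omega)
      rw [show 0 + j = n + 1 by omega] at ih0
      simp only [Nat.cast_succ, Nat.cast_zero, add_sub_cancel_right] at ih0 ⊢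
      rw [ih0]
      simp only [genChangheeS, fallingFactorial_succ]
      push_cast
      ring
    · have ih0 := ih i 0 (by omega) (by omega)
      rw [show i + 0 = n + 1 by omega] at ih0
      simp only [Nat.cast_succ, Nat.cast_zero, add_sub_cancel_right] at ih0 ⊢
      rw [ih0, aCh_eq_zero_of_neg_right _ _ _ _ (by norm_num)]
      simp only [genChangheeS_zero_right, Nat.factorial_succ, pow_succ]
      push_cast
      ring
    · have ih1 := ih i (j + 1) (by omega) (by omega)
      have ih2 := ih (i + 1) j (by omega) (by omega)
      rw [show i + (j + 1) = n + 1 by omega] at ih1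
      rw [show i + 1 + j = n + 1 by omega] at ih2
      simp only [Nat.cast_succ, add_sub_cancel_right] at ih1 ih2 ⊢
      rw [ih1, ih2]
      simp only [genChangheeS_succ_succ, fallingFactorial_succ, Nat.factorial_succ, pow_succ]
      push_cast
      ring

theorem aCh_top_order_general (N i : ℕ) (hi2 : i ≤ N) (x : ℝ) :
    aCh (N + 1) (i : ℤ) ((N : ℤ) + 1 - (i : ℤ)) x
      = (-1 : ℝ) ^ i * (Nat.factorial i : ℝ) * (genChangheeS i (N - i + 1) : ℝ) *
          fallingFactorial x (N - i + 1) := by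
  obtain ⟨j, rfl⟩ : ∃ j, N = i + j := ⟨N - i, by omega⟩
  rw [show i + j - i + 1 = j + 1 by omega, ← aCh_diag i (j + 1) (by omega) x]
  rw [show i + j + 1 = i + (j + 1) by ring]
  congr 1
  push_cast
  ring

/-- Top-order coefficients: `a_{i,N+1-i}(N+1,x) = (-1)^i · i! · S_{1,i-1}(N-i+1) · (x)_{N-i+1}`
for `1 ≤ i ≤ N`. -/
theorem aCh_top_order (N i : ℕ) (hN : 1 ≤ N) (hi1 : 1 ≤ i) (hi2 : i ≤ N) (x : ℝ) :
    aCh (N + 1) (i : ℤ) ((N : ℤ) + 1 - (i : ℤ)) x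
      = (-1 : ℝ) ^ i * (Nat.factorial i : ℝ) * (genChangheeS i (N - i + 1) : ℝ) *
          fallingFactorial x (N - i + 1) :=
  aCh_top_order_general N i hi2 x
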